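/- Let μ ∈ ℝ, σ > 0, q > 0 and let μ_q : (0,∞) → ℝ be the logarithmic derivative of the scale function ω(x) = e^{r₊x} - e^{r₋x}, where r₊ > 0 > r₋ solve (σ²/2)r² + μr - q = 0. Then the function G(Δ) = μ_q(Δ)² + (2μ/σ²)μ_q(Δ) - 2q/σ² is strictly decreasing on (0,∞), tends to +∞ as Δ → 0⁺, and is nonnegative on (0,∞). -/

import Mathlib

open Real Set Filter Topology

/-! Since `r₊ ≠ r₋` are the roots of `(σ²/2) r² + μ r - q`, the function `G` factors as
`(μ_q - r₊) (μ_q - r₋)`. Writing `c = (r₊ - r₋)/2`, the scale function is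
`ω(x) = 2 e^{(r₊ + r₋) x / 2} sinh (c x)`, and `cosh² - sinh² = 1` turns that product into
`(c / sinh (c x))²`, which is strictly decreasing on `(0, ∞)` and blows up at `0⁺` because
`sinh` is increasing and vanishes at `0`. -/

theorem quadratic_eq_mul_sub_mul_sub {K : Type*} [CommRing K] [IsDomain K] {a b c x y : K}
    (hxy : x ≠ y) (hx : a * x ^ 2 + b * x + c = 0) (hy : a * y ^ 2 + b * y + c = 0) (z : K) :
    a * z ^ 2 + b * z + c = a * (z - x) * (z - y) := by
  have hb : b = -a * (x + y) := by
    have h : (x - y) * (a * (x + y) + b) = 0 := by linear_combination hx - hy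
    linear_combination (mul_eq_zero.1 h).resolve_left (sub_ne_zero.2 hxy)
  have hc : c = a * x * y := by linear_combination hx - x * hb
  rw [hb, hc]
  ring

theorem deriv_exp_mul_sub_exp_mul (a b x : ℝ) :
    deriv (fun x => exp (a * x) - exp (b * x)) x = a * exp (a * x) - b * exp (b * x) := by
  have h : HasDerivAt (fun x => exp (a * x) - exp (b * x))
      (exp (a * x) * (a * 1) - exp (b * x) * (b * 1)) x :=
    ((hasDerivAt_id' x).const_mul a).exp.sub ((hasDerivAt_id' x).const_mul b).exp
  rw [h.deriv]
  ring

theorem logDeriv_exp_mul_sub_exp_mul_sub_mul_sub {a b x : ℝ} (hab : a ≠ b) (hx : x ≠ 0) :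
    (logDeriv (fun x => exp (a * x) - exp (b * x)) x - a) *
        (logDeriv (fun x => exp (a * x) - exp (b * x)) x - b) =
      ((a - b) / 2 / sinh ((a - b) / 2 * x)) ^ 2 := by
  set u := (a - b) / 2 * x with hu
  set E := exp ((a + b) / 2 * x) with hE
  have hexp_a : exp (a * x) = E * (cosh u + sinh u) := by
    rw [hE, hu, cosh_add_sinh, ← exp_add]; ring_nf
  have hexp_b : exp (b * x) = E * (cosh u - sinh u) := by
    rw [hE, hu, cosh_sub_sinh, ← exp_add]; ring_nf
  have hω : E * (cosh u + sinh u) - E * (cosh u - sinh u) = 2 * E * sinh u := by ring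
  have hE0 : E ≠ 0 := (exp_pos _).ne'
  have hs : sinh u ≠ 0 := by
    simpa [u, sinh_eq_zero, sub_eq_zero] using And.intro hab hx
  rw [logDeriv_apply, deriv_exp_mul_sub_exp_mul, hexp_a, hexp_b, hω]
  field_simp
  linear_combination (a - b) ^ 2 * cosh_sq_sub_sinh_sq u

theorem strictAntiOn_div_sinh_mul_sq {c : ℝ} (hc : 0 < c) :
    StrictAntiOn (fun x => (c / sinh (c * x)) ^ 2) (Ioi 0) := by
  intro x hx y hy hxy
  have hsx : 0 < sinh (c * x) := sinh_pos_iff.2 (mul_pos hc hx)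
  have hsxy : sinh (c * x) < sinh (c * y) := sinh_lt_sinh.2 (mul_lt_mul_of_pos_left hxy hc)
  have hdiv : c / sinh (c * y) < c / sinh (c * x) := div_lt_div_of_pos_left hc hsx hsxy
  exact pow_lt_pow_left₀ hdiv (div_pos hc (hsx.trans hsxy)).le two_ne_zero

theorem tendsto_div_sinh_mul_sq_nhdsGT_zero {c : ℝ} (hc : 0 < c) :
    Tendsto (fun x => (c / sinh (c * x)) ^ 2) (𝓝[>] 0) atTop := by
  have hsinh : Tendsto (fun x => sinh (c * x)) (𝓝[>] 0) (𝓝[>] 0) := by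
    refine tendsto_nhdsWithin_iff.2 ⟨?_, ?_⟩
    · have hcont : Continuous fun x => sinh (c * x) := by fun_prop
      exact (hcont.tendsto' 0 0 (by simp)).mono_left nhdsWithin_le_nhds
    · filter_upwards [self_mem_nhdsWithin] with x hx
      exact sinh_pos_iff.2 (mul_pos hc hx)
  have hdiv : Tendsto (fun x => c / sinh (c * x)) (𝓝[>] 0) atTop :=
    (hsinh.inv_tendsto_nhdsGT_zero.const_mul_atTop hc).congr fun _ => (div_eq_mul_inv _ _).symm
  exact (tendsto_pow_atTop two_ne_zero).comp hdiv

theorem structure_equation_lhs_monotone_general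
    (μ σ q rp rm : ℝ) (hσ : 0 < σ)
    (hrp : 0 < rp) (hrm : rm < 0)
    (hrootp : σ ^ 2 / 2 * rp ^ 2 + μ * rp - q = 0)
    (hrootm : σ ^ 2 / 2 * rm ^ 2 + μ * rm - q = 0)
    (ω μq G : ℝ → ℝ)
    (hω : ∀ x, ω x = Real.exp (rp * x) - Real.exp (rm * x))
    (hμq : ∀ x, 0 < x → μq x = deriv ω x / ω x)
    (hG : ∀ Δ, G Δ = (μq Δ) ^ 2 + (2 * μ / σ ^ 2) * μq Δ - 2 * q / σ ^ 2) :
    StrictAntiOn G (Set.Ioi 0) ∧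
      Tendsto G (nhdsWithin 0 (Set.Ioi 0)) atTop ∧
      ∀ Δ, 0 < Δ → 0 ≤ G Δ := by
  obtain rfl : ω = fun x => exp (rp * x) - exp (rm * x) := funext hω
  have hne : rp ≠ rm := (hrm.trans hrp).ne'
  have hc : 0 < (rp - rm) / 2 := half_pos (sub_pos.2 (hrm.trans hrp))
  have hfactor : ∀ m, m ^ 2 + 2 * μ / σ ^ 2 * m - 2 * q / σ ^ 2 = (m - rp) * (m - rm) := by
    intro m
    have h := quadratic_eq_mul_sub_mul_sub (a := σ ^ 2 / 2) (b := μ) (c := -q) hne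
      (by linear_combination hrootp) (by linear_combination hrootm) m
    field_simp
    linear_combination 2 * h
  have hGeq : EqOn G (fun x => ((rp - rm) / 2 / sinh ((rp - rm) / 2 * x)) ^ 2) (Ioi 0) := by
    intro x hx
    rw [hG, hfactor, hμq x hx, ← logDeriv_apply,
      logDeriv_exp_mul_sub_exp_mul_sub_mul_sub hne hx.ne']
  exact ⟨(strictAntiOn_div_sinh_mul_sq hc).congr hGeq.symm,
    (tendsto_div_sinh_mul_sq_nhdsGT_zero hc).congr' (eventuallyEq_nhdsWithin_of_eqOn hGeq).symm,
    fun Δ hΔ => hGeq hΔ ▸ sq_nonneg _⟩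

/-- The left-hand side G(Δ) = μ_q(Δ)² + (2μ/σ²)μ_q(Δ) - 2q/σ² of the structure
equation is strictly decreasing, blows up at 0⁺, and is nonnegative on (0,∞). -/
theorem structure_equation_lhs_monotone
    (μ σ q rp rm : ℝ) (hσ : 0 < σ) (hq : 0 < q)
    (hrp : 0 < rp) (hrm : rm < 0)
    (hrootp : σ ^ 2 / 2 * rp ^ 2 + μ * rp - q = 0)
    (hrootm : σ ^ 2 / 2 * rm ^ 2 + μ * rm - q = 0)
    (ω μq G : ℝ → ℝ)
    (hω : ∀ x, ω x = Real.exp (rp * x) - Real.exp (rm * x))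
    (hμq : ∀ x, 0 < x → μq x = deriv ω x / ω x)
    (hG : ∀ Δ, G Δ = (μq Δ) ^ 2 + (2 * μ / σ ^ 2) * μq Δ - 2 * q / σ ^ 2) :
    StrictAntiOn G (Set.Ioi 0) ∧
      Tendsto G (nhdsWithin 0 (Set.Ioi 0)) atTop ∧
      ∀ Δ, 0 < Δ → 0 ≤ G Δ :=
  structure_equation_lhs_monotone_general μ σ q rp rm hσ hrp hrm hrootp hrootm ω μq G hω hμq hG
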